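/- Let (X,S) be an association scheme, (Y,T) a 3-equivalenced association scheme, x₀ ∈ X and y₀ ∈ Y. For every t ∈ T ∖ {1_Y} and every central primitive idempotent e_ψ of the adjacency algebra A(S) = span{σ_s : s ∈ S} with e_ψ ≠ |X|^{-1} J_X (the trivial central primitive idempotent of A(S)), the Kronecker product e_ψ ⊗ ε_{y₀t} ∈ Mat_{X×Y}(ℂ) is a central primitive idempotent of the Terwilliger algebra T(S≀T) of the wreath product at (x₀,y₀). -/

import Mathlib

open Matrix BigOperators Kronecker
open scoped Classical

section Defs

variable {Z : Type*} [Fintype Z] [DecidableEq Z]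

/-- The identity (diagonal) relation on `Z`. -/
def diagRel (Z : Type*) [Fintype Z] [DecidableEq Z] : Finset (Z × Z) :=
  Finset.univ.filter fun p => p.1 = p.2

/-- The converse relation. -/
def convRel (s : Finset (Z × Z)) : Finset (Z × Z) := s.image fun p => (p.2, p.1)

/-- The intersection number `p_{st}^u`, computed at an arbitrary pair of `u`. -/
noncomputable def pNum (s t u : Finset (Z × Z)) : ℕ :=
  if h : u.Nonempty then
    (Finset.univ.filter fun z => (h.choose.1, z) ∈ s ∧ (z, h.choose.2) ∈ t).card
  else 0

/-- The valency `n_s = p_{s s*}^{1}`. -/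
noncomputable def valency (s : Finset (Z × Z)) : ℕ := pNum s (convRel s) (diagRel Z)

/-- The adjacency matrix of a relation. -/
def adjMat (s : Finset (Z × Z)) : Matrix Z Z ℂ :=
  Matrix.of fun x y => if (x, y) ∈ s then 1 else 0

/-- The diagonal 0/1 matrix of a subset. -/
def eps (U : Finset Z) : Matrix Z Z ℂ := Matrix.diagonal fun i => if i ∈ U then 1 else 0

/-- The all-ones matrix. -/
def allOnes (Z : Type*) : Matrix Z Z ℂ := Matrix.of fun _ _ => 1

/-- `pointFiber x s = xs = {y : (x,y) ∈ s}`. -/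
def pointFiber (x : Z) (s : Finset (Z × Z)) : Finset Z :=
  Finset.univ.filter fun y => (x, y) ∈ s

/-- An association scheme on a finite set `Z`: a partition of `Z × Z` into nonempty
relations containing the identity relation, closed under converse, and with
well-defined intersection numbers. -/
structure AssocScheme (Z : Type*) [Fintype Z] [DecidableEq Z] where
  rels : Finset (Finset (Z × Z))
  nonempty_mem : ∀ s ∈ rels, s.Nonempty
  cover : ∀ p : Z × Z, ∃ s ∈ rels, p ∈ s
  pairwise_disjoint : ∀ s ∈ rels, ∀ t ∈ rels, s ≠ t → Disjoint s t
  id_mem : diagRel Z ∈ rels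
  conv_mem : ∀ s ∈ rels, convRel s ∈ rels
  pconst : ∀ s ∈ rels, ∀ t ∈ rels, ∀ u ∈ rels, ∀ p ∈ u, ∀ q ∈ u,
    (Finset.univ.filter fun z => (p.1, z) ∈ s ∧ (z, p.2) ∈ t).card =
    (Finset.univ.filter fun z => (q.1, z) ∈ s ∧ (z, q.2) ∈ t).card

/-- A scheme is 3-equivalenced when it has more than one point and every
non-identity basic relation has valency 3. -/
def ThreeEquivalenced (B : AssocScheme Z) : Prop :=
  1 < Fintype.card Z ∧ ∀ t ∈ B.rels, t ≠ diagRel Z → valency t = 3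

/-- A scheme is k-equivalenced when it has more than one point and every
non-identity basic relation has valency k. -/
def KEquivalenced (B : AssocScheme Z) (k : ℕ) : Prop :=
  1 < Fintype.card Z ∧ ∀ t ∈ B.rels, t ≠ diagRel Z → valency t = k

/-- A scheme is imprimitive if some union of basic relations is an equivalence
relation different from the identity relation and from the full relation. -/
def Imprimitive (B : AssocScheme Z) : Prop :=
  ∃ R ⊆ B.rels, Equivalence (fun x y : Z => (x, y) ∈ R.sup id) ∧
    R.sup id ≠ diagRel Z ∧ R.sup id ≠ Finset.univ

/-- A coherent algebra: a subalgebra of the matrix algebra containing the all-ones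
matrix (and the identity), closed under conjugate transpose and Hadamard product. -/
def IsCoherent (𝒜 : Subalgebra ℂ (Matrix Z Z ℂ)) : Prop :=
  allOnes Z ∈ 𝒜 ∧ (∀ M ∈ 𝒜, Mᴴ ∈ 𝒜) ∧
  ∀ M ∈ 𝒜, ∀ N ∈ 𝒜, Matrix.hadamard M N ∈ 𝒜

/-- The one-point-extension algebra: the smallest coherent algebra containing all
adjacency matrices of the scheme and the diagonal matrix unit at `x`. -/
noncomputable def onePointAlg (B : AssocScheme Z) (x : Z) : Subalgebra ℂ (Matrix Z Z ℂ) :=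
  sInf {𝒜 | IsCoherent 𝒜 ∧ (∀ s ∈ B.rels, adjMat s ∈ 𝒜) ∧ eps {x} ∈ 𝒜}

/-- A matrix has only 0/1 entries. -/
def IsZeroOne (M : Matrix Z Z ℂ) : Prop := ∀ i j, M i j = 0 ∨ M i j = 1

/-- A basic relation matrix of a coherent algebra: a nonzero 0/1 matrix in the
algebra whose only 0/1 minorants in the algebra are 0 and itself. -/
def IsBasicMatrix (𝒜 : Subalgebra ℂ (Matrix Z Z ℂ)) (B : Matrix Z Z ℂ) : Prop :=
  B ∈ 𝒜 ∧ IsZeroOne B ∧ B ≠ 0 ∧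
  ∀ C ∈ 𝒜, IsZeroOne C → (∀ i j, C i j = 1 → B i j = 1) → C = 0 ∨ C = B

/-- The Terwilliger algebra of a scheme with respect to the base point `x`. -/
noncomputable def terwAlg (B : AssocScheme Z) (x : Z) : Subalgebra ℂ (Matrix Z Z ℂ) :=
  Algebra.adjoin ℂ
    ({M | ∃ s ∈ B.rels, M = adjMat s} ∪ {M | ∃ s ∈ B.rels, M = eps (pointFiber x s)})

/-- A central primitive idempotent of a (set underlying a) matrix algebra: a nonzero
central idempotent that is not the sum of two nonzero orthogonal central idempotents. -/
def IsCPI {n : Type*} [Fintype n] [DecidableEq n] (𝒜 : Set (Matrix n n ℂ))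
    (e : Matrix n n ℂ) : Prop :=
  e ∈ 𝒜 ∧ e ≠ 0 ∧ e * e = e ∧ (∀ a ∈ 𝒜, a * e = e * a) ∧
  ¬∃ f g : Matrix n n ℂ, f ∈ 𝒜 ∧ g ∈ 𝒜 ∧ f ≠ 0 ∧ g ≠ 0 ∧
    f * f = f ∧ g * g = g ∧ (∀ a ∈ 𝒜, a * f = f * a) ∧ (∀ a ∈ 𝒜, a * g = g * a) ∧
    f * g = 0 ∧ g * f = 0 ∧ e = f + g

/-- The trivial central primitive idempotent
`∑_{s∈S} n_s⁻¹ ε_{x s} J ε_{x s}` of the Terwilliger algebra. -/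
noncomputable def trivTerwIdem (B : AssocScheme Z) (x : Z) : Matrix Z Z ℂ :=
  ∑ s ∈ B.rels, ((valency s : ℂ)⁻¹) •
    (eps (pointFiber x s) * allOnes Z * eps (pointFiber x s))

/-- The adjacency algebra `A(S) = span{σ_s : s ∈ S}` as a set of matrices. -/
def adjAlgSet (B : AssocScheme Z) : Set (Matrix Z Z ℂ) :=
  ↑(Submodule.span ℂ {M | ∃ s ∈ B.rels, M = adjMat s})

end Defs

section Wreath

variable {X Y : Type*} [Fintype X] [DecidableEq X] [Fintype Y] [DecidableEq Y]

/-- Generators of the Terwilliger algebra of the wreath product at `(x₀, y₀)`. -/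
def wreathGens (A : AssocScheme X) (B : AssocScheme Y) (x₀ : X) (y₀ : Y) :
    Set (Matrix (X × Y) (X × Y) ℂ) :=
  {M | ∃ s ∈ A.rels, M = adjMat s ⊗ₖ (1 : Matrix Y Y ℂ)} ∪
  {M | ∃ s ∈ A.rels, M = eps (pointFiber x₀ s) ⊗ₖ eps ({y₀} : Finset Y)} ∪
  {M | ∃ t ∈ B.rels, t ≠ diagRel Y ∧ M = allOnes X ⊗ₖ adjMat t} ∪
  {M | ∃ t ∈ B.rels, t ≠ diagRel Y ∧ M = (1 : Matrix X X ℂ) ⊗ₖ eps (pointFiber y₀ t)}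

/-- The Terwilliger algebra of the wreath product at `(x₀, y₀)`. -/
noncomputable def wreathTerw (A : AssocScheme X) (B : AssocScheme Y) (x₀ : X) (y₀ : Y) :
    Subalgebra ℂ (Matrix (X × Y) (X × Y) ℂ) :=
  Algebra.adjoin ℂ (wreathGens A B x₀ y₀)

/-- The relation `s̃` of the wreath product coming from `s ∈ S`. -/
def tildeRel (s : Finset (X × X)) : Finset ((X × Y) × (X × Y)) :=
  Finset.univ.filter fun p => (p.1.1, p.2.1) ∈ s ∧ p.1.2 = p.2.2

/-- The relation `t̄` of the wreath product coming from `t ∈ T \ {1}`. -/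
def barRel (t : Finset (Y × Y)) : Finset ((X × Y) × (X × Y)) :=
  Finset.univ.filter fun p => (p.1.2, p.2.2) ∈ t

/-- The basic relations of the wreath product `S ≀ T`. -/
def wreathRels (A : AssocScheme X) (B : AssocScheme Y) :
    Finset (Finset ((X × Y) × (X × Y))) :=
  A.rels.image (tildeRel (Y := Y)) ∪ (B.rels.erase (diagRel Y)).image (barRel (X := X))

/-- The trivial central primitive idempotent
`e₀ = ∑_u n_u⁻¹ ε_{(x₀,y₀)u} J ε_{(x₀,y₀)u}` of `T(S ≀ T)`. -/
noncomputable def wreathTriv (A : AssocScheme X) (B : AssocScheme Y) (x₀ : X) (y₀ : Y) :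
    Matrix (X × Y) (X × Y) ℂ :=
  ∑ u ∈ wreathRels A B, ((valency u : ℂ)⁻¹) •
    (eps (pointFiber (x₀, y₀) u) * allOnes (X × Y) * eps (pointFiber (x₀, y₀) u))

/-- `ω = e^{2πi/3}`. -/
noncomputable def omega3 : ℂ := Complex.exp (2 * Real.pi * Complex.I / 3)

/-- The shifted matching matrix `∑_i E_{y_{t(i)}, y_{t'(i+k)}}` on `y₀t × y₀t'`. -/
noncomputable def cyc (enum : Finset (Y × Y) → Fin 3 → Y) (t t' : Finset (Y × Y))
    (k : Fin 3) : Matrix Y Y ℂ :=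
  ∑ i : Fin 3, Matrix.single (enum t i) (enum t' (i + k)) 1

/-- `G_{y₀t, y₀t'}`. -/
noncomputable def Gmat (X : Type*) [Fintype X] (enum : Finset (Y × Y) → Fin 3 → Y)
    (t t' : Finset (Y × Y)) : Matrix (X × Y) (X × Y) ℂ :=
  ((3 * (Fintype.card X : ℂ))⁻¹) •
    (allOnes X ⊗ₖ (cyc enum t t' 0 + omega3 • cyc enum t t' 1 + omega3 ^ 2 • cyc enum t t' 2))

/-- `G'_{y₀t, y₀t'}`. -/
noncomputable def Gmat' (X : Type*) [Fintype X] (enum : Finset (Y × Y) → Fin 3 → Y)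
    (t t' : Finset (Y × Y)) : Matrix (X × Y) (X × Y) ℂ :=
  ((3 * (Fintype.card X : ℂ))⁻¹) •
    (allOnes X ⊗ₖ (cyc enum t t' 0 + omega3 ^ 2 • cyc enum t t' 1 + omega3 • cyc enum t t' 2))

/-- `enum` enumerates each set `y₀t` (for non-identity `t`) by `Fin 3`. -/
def IsEnum (B : AssocScheme Y) (y₀ : Y) (enum : Finset (Y × Y) → Fin 3 → Y) : Prop :=
  ∀ t ∈ B.rels, t ≠ diagRel Y →
    Function.Injective (enum t) ∧ ∀ y, y ∈ pointFiber y₀ t ↔ ∃ i, enum t i = y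

/-- The enumerations are well-ordering: every basic relation matrix of the
one-point-extension algebra which is nonzero on `y₀t × y₀t'` restricts there to one of
the cyclic permutation matrices `I, C, C²`. -/
def IsWellOrdering (B : AssocScheme Y) (y₀ : Y) (enum : Finset (Y × Y) → Fin 3 → Y) : Prop :=
  IsEnum B y₀ enum ∧
  ∀ t ∈ B.rels, t ≠ diagRel Y → ∀ t' ∈ B.rels, t' ≠ diagRel Y →
    ∀ M : Matrix Y Y ℂ, IsBasicMatrix (onePointAlg B y₀) M →
      (∃ i j : Fin 3, M (enum t i) (enum t' j) ≠ 0) →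
      ∃ k : Fin 3, ∀ i j : Fin 3,
        M (enum t i) (enum t' j) = if j = i + k then 1 else 0

/-- The set of all matrices `G_{y₀t, y₀t'}`, `t, t' ∈ T₃`. -/
noncomputable def GmatSet (X : Type*) [Fintype X] (B : AssocScheme Y)
    (enum : Finset (Y × Y) → Fin 3 → Y) : Set (Matrix (X × Y) (X × Y) ℂ) :=
  {M | ∃ t ∈ B.rels.erase (diagRel Y), ∃ t' ∈ B.rels.erase (diagRel Y), M = Gmat X enum t t'}

/-- The set of all matrices `G'_{y₀t, y₀t'}`, `t, t' ∈ T₃`. -/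
noncomputable def GmatSet' (X : Type*) [Fintype X] (B : AssocScheme Y)
    (enum : Finset (Y × Y) → Fin 3 → Y) : Set (Matrix (X × Y) (X × Y) ℂ) :=
  {M | ∃ t ∈ B.rels.erase (diagRel Y), ∃ t' ∈ B.rels.erase (diagRel Y), M = Gmat' X enum t t'}

/-- `e_{η1} = ∑_{t ∈ T₃} G_{y₀t, y₀t}`. -/
noncomputable def etaOne (X : Type*) [Fintype X] (B : AssocScheme Y)
    (enum : Finset (Y × Y) → Fin 3 → Y) : Matrix (X × Y) (X × Y) ℂ :=
  ∑ t ∈ B.rels.erase (diagRel Y), Gmat X enum t t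

/-- `e_{η2} = ∑_{t ∈ T₃} G'_{y₀t, y₀t}`. -/
noncomputable def etaTwo (X : Type*) [Fintype X] (B : AssocScheme Y)
    (enum : Finset (Y × Y) → Fin 3 → Y) : Matrix (X × Y) (X × Y) ℂ :=
  ∑ t ∈ B.rels.erase (diagRel Y), Gmat' X enum t t

end Wreath

/-!
Let `E = ε_{y₀t}` and `c = e ⊗ E`. Since `e` is a nontrivial central primitive idempotent of
`A(S)` and `|X|⁻¹ J` is a central idempotent there, `eJ = Je = 0`. Checking the four kinds of
generators of `T(S ≀ T)` one sees that each generator `g` satisfies `cg = gc = M ⊗ E` for some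
`M ∈ A(S)`; hence `c` is central in `T(S ≀ T)` and the corner `c T(S ≀ T)` lies in the image of the
injective homomorphism `M ↦ M ⊗ E` on `A(S)`, which itself lies in `T(S ≀ T)`. A decomposition of
`c` into orthogonal central idempotents therefore pulls back to one of `e` in `A(S)`.
-/

section Scheme

variable {Z : Type*}

@[simp]
lemma mem_diagRel [Fintype Z] [DecidableEq Z] {a b : Z} : (a, b) ∈ diagRel Z ↔ a = b := by
  simp [diagRel]

@[simp]
lemma mem_convRel [DecidableEq Z] {s : Finset (Z × Z)} {a b : Z} :
    (a, b) ∈ convRel s ↔ (b, a) ∈ s := by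
  simp [convRel, and_comm]

@[simp]
lemma mem_pointFiber [Fintype Z] [DecidableEq Z] {x y : Z} {s : Finset (Z × Z)} :
    y ∈ pointFiber x s ↔ (x, y) ∈ s := by
  simp [pointFiber]

lemma pointFiber_diagRel [Fintype Z] [DecidableEq Z] (x : Z) :
    pointFiber x (diagRel Z) = {x} := by
  ext y
  simp [eq_comm]

lemma adjMat_apply [DecidableEq Z] (s : Finset (Z × Z)) (x y : Z) :
    adjMat s x y = if (x, y) ∈ s then 1 else 0 := rfl

lemma adjMat_diagRel [Fintype Z] [DecidableEq Z] : adjMat (diagRel Z) = 1 := by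
  ext x y
  simp [adjMat_apply, Matrix.one_apply]

lemma allOnes_mul_allOnes [Fintype Z] :
    allOnes Z * allOnes Z = (Fintype.card Z : ℂ) • allOnes Z := by
  ext x y
  simp [allOnes, Matrix.mul_apply]

lemma eps_mul_eps [Fintype Z] [DecidableEq Z] (U V : Finset Z) : eps U * eps V = eps (U ∩ V) := by
  simp only [eps, Matrix.diagonal_mul_diagonal, Finset.mem_inter, ite_zero_mul_ite_zero, mul_one]

lemma isIdempotentElem_eps [Fintype Z] [DecidableEq Z] (U : Finset Z) :
    IsIdempotentElem (eps U) := by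
  rw [IsIdempotentElem, eps_mul_eps, Finset.inter_self]

lemma eps_ne_zero [DecidableEq Z] {U : Finset Z} (hU : U.Nonempty) : eps U ≠ 0 := by
  obtain ⟨u, hu⟩ := hU
  intro h
  simpa [eps, hu] using congrFun (congrFun h u) u

variable [Fintype Z] [DecidableEq Z]

namespace AssocScheme

variable (S : AssocScheme Z)

lemma eq_of_mem_of_mem {s u : Finset (Z × Z)} (hs : s ∈ S.rels) (hu : u ∈ S.rels)
    {p : Z × Z} (hps : p ∈ s) (hpu : p ∈ u) : s = u := by
  by_contra hne
  exact Finset.disjoint_left.mp (S.pairwise_disjoint s hs u hu hne) hps hpu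

lemma pNum_eq_card {s t u : Finset (Z × Z)} (hs : s ∈ S.rels) (ht : t ∈ S.rels)
    (hu : u ∈ S.rels) {p : Z × Z} (hp : p ∈ u) :
    pNum s t u = (Finset.univ.filter fun z => (p.1, z) ∈ s ∧ (z, p.2) ∈ t).card := by
  have hne : u.Nonempty := ⟨p, hp⟩
  rw [pNum, dif_pos hne]
  exact S.pconst s hs t ht u hu _ hne.choose_spec p hp

lemma card_pointFiber {s : Finset (Z × Z)} (hs : s ∈ S.rels) (x : Z) :
    (pointFiber x s).card = valency s := by
  rw [valency, S.pNum_eq_card hs (S.conv_mem s hs) S.id_mem (mem_diagRel.mpr rfl : (x, x) ∈ _)]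
  simp [pointFiber]

lemma pointFiber_nonempty {s : Finset (Z × Z)} (hs : s ∈ S.rels) (x : Z) :
    (pointFiber x s).Nonempty := by
  obtain ⟨⟨a, b⟩, hab⟩ := S.nonempty_mem s hs
  have hcard : 0 < (pointFiber a s).card := Finset.card_pos.mpr ⟨b, mem_pointFiber.mpr hab⟩
  rw [← Finset.card_pos, S.card_pointFiber hs]
  rwa [S.card_pointFiber hs] at hcard

lemma eps_pointFiber_mul_eps_pointFiber {s t : Finset (Z × Z)} (hs : s ∈ S.rels)
    (ht : t ∈ S.rels) (x : Z) :
    eps (pointFiber x s) * eps (pointFiber x t) = if s = t then eps (pointFiber x s) else 0 := by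
  rw [eps_mul_eps]
  split_ifs with hst
  · rw [hst, Finset.inter_self]
  · have hdisj : pointFiber x s ∩ pointFiber x t = ∅ := by
      ext y
      simpa using fun hys hyt => hst (S.eq_of_mem_of_mem hs ht hys hyt)
    ext i j
    simp [hdisj, eps]

lemma adjMat_mul_adjMat {s t : Finset (Z × Z)} (hs : s ∈ S.rels) (ht : t ∈ S.rels) :
    adjMat s * adjMat t = ∑ u ∈ S.rels, (pNum s t u : ℂ) • adjMat u := by
  ext x y
  obtain ⟨u₀, hu₀, hxy⟩ := S.cover (x, y)
  have hoff : ∀ u ∈ S.rels, u ≠ u₀ → ((pNum s t u : ℂ) • adjMat u) x y = 0 := fun u hu hne => by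
    have hxyu : (x, y) ∉ u := fun h => hne (S.eq_of_mem_of_mem hu hu₀ h hxy)
    simp [adjMat_apply, hxyu]
  rw [Matrix.sum_apply, Finset.sum_eq_single_of_mem u₀ hu₀ hoff, Matrix.smul_apply, adjMat_apply,
    if_pos hxy, smul_eq_mul, mul_one, S.pNum_eq_card hs ht hu₀ hxy, Matrix.mul_apply]
  simp only [adjMat_apply, ite_zero_mul_ite_zero, mul_one, Finset.sum_boole]

lemma sum_adjMat : ∑ s ∈ S.rels, adjMat s = allOnes Z := by
  ext x y
  obtain ⟨u₀, hu₀, hxy⟩ := S.cover (x, y)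
  have hoff : ∀ u ∈ S.rels, u ≠ u₀ → adjMat u x y = 0 := fun u hu hne => by
    have hxyu : (x, y) ∉ u := fun h => hne (S.eq_of_mem_of_mem hu hu₀ h hxy)
    simp [adjMat_apply, hxyu]
  rw [Matrix.sum_apply, Finset.sum_eq_single_of_mem u₀ hu₀ hoff]
  simp [adjMat_apply, hxy, allOnes]

lemma adjMat_mul_allOnes {s : Finset (Z × Z)} (hs : s ∈ S.rels) :
    adjMat s * allOnes Z = (valency s : ℂ) • allOnes Z := by
  ext x y
  simp [Matrix.mul_apply, allOnes, adjMat_apply, ← S.card_pointFiber hs x, pointFiber]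

lemma allOnes_mul_adjMat {s : Finset (Z × Z)} (hs : s ∈ S.rels) :
    allOnes Z * adjMat s = (valency (convRel s) : ℂ) • allOnes Z := by
  ext x y
  simp [Matrix.mul_apply, allOnes, adjMat_apply,
    ← S.card_pointFiber (S.conv_mem s hs) y, pointFiber]

/-- Double counting: `|Z| n_{s*}` and `|Z| n_s` are both the entries of `J σ_s J`. -/
lemma valency_convRel {s : Finset (Z × Z)} (hs : s ∈ S.rels) :
    valency (convRel s) = valency s := by
  obtain ⟨⟨x, -⟩, -⟩ := S.nonempty_mem s hs
  have : Nonempty Z := ⟨x⟩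
  have h := congrFun (congrFun (Matrix.mul_assoc (allOnes Z) (adjMat s) (allOnes Z)) x) x
  rw [S.allOnes_mul_adjMat hs, S.adjMat_mul_allOnes hs, Matrix.smul_mul, Matrix.mul_smul,
    allOnes_mul_allOnes] at h
  have hcard : (Fintype.card Z : ℂ) ≠ 0 := Nat.cast_ne_zero.mpr Fintype.card_ne_zero
  simpa [allOnes, hcard] using h

def adjGens : Set (Matrix Z Z ℂ) := {M | ∃ s ∈ S.rels, M = adjMat s}

lemma mul_mem_span_adjGens {a b : Matrix Z Z ℂ} (ha : a ∈ Submodule.span ℂ S.adjGens)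
    (hb : b ∈ Submodule.span ℂ S.adjGens) : a * b ∈ Submodule.span ℂ S.adjGens := by
  have hab := Submodule.mul_mem_mul ha hb
  rw [Submodule.span_mul_span] at hab
  refine Submodule.span_le.mpr ?_ hab
  rintro _ ⟨_, ⟨s, hs, rfl⟩, _, ⟨t, ht, rfl⟩, rfl⟩
  change adjMat s * adjMat t ∈ _
  rw [S.adjMat_mul_adjMat hs ht]
  exact Submodule.sum_mem _ fun u hu => Submodule.smul_mem _ _ (Submodule.subset_span ⟨u, hu, rfl⟩)

def adjAlg : Subalgebra ℂ (Matrix Z Z ℂ) :=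
  (Submodule.span ℂ S.adjGens).toSubalgebra
    (adjMat_diagRel (Z := Z) ▸ Submodule.subset_span ⟨_, S.id_mem, rfl⟩)
    (fun _ _ => S.mul_mem_span_adjGens)

lemma coe_adjAlg : (S.adjAlg : Set (Matrix Z Z ℂ)) = adjAlgSet S := rfl

lemma adjMat_mem_adjAlg {s : Finset (Z × Z)} (hs : s ∈ S.rels) : adjMat s ∈ S.adjAlg :=
  Submodule.subset_span ⟨s, hs, rfl⟩

lemma allOnes_mem_adjAlg : allOnes Z ∈ S.adjAlg :=
  S.sum_adjMat ▸ Subalgebra.sum_mem _ fun _ hs => S.adjMat_mem_adjAlg hs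

lemma exists_mul_allOnes_eq_smul {a : Matrix Z Z ℂ} (ha : a ∈ S.adjAlg) :
    ∃ c : ℂ, a * allOnes Z = c • allOnes Z ∧ allOnes Z * a = c • allOnes Z := by
  change a ∈ Submodule.span ℂ S.adjGens at ha
  induction ha using Submodule.span_induction with
  | mem _ hM =>
    obtain ⟨s, hs, rfl⟩ := hM
    exact ⟨valency s, S.adjMat_mul_allOnes hs, S.valency_convRel hs ▸ S.allOnes_mul_adjMat hs⟩
  | zero => exact ⟨0, by simp, by simp⟩
  | add a b _ _ ha hb =>
    obtain ⟨c, hca, hca'⟩ := ha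
    obtain ⟨d, hdb, hdb'⟩ := hb
    exact ⟨c + d, by rw [add_mul, hca, hdb, add_smul], by rw [mul_add, hca', hdb', add_smul]⟩
  | smul r a _ ha =>
    obtain ⟨c, hca, hca'⟩ := ha
    exact ⟨r * c, by rw [Matrix.smul_mul, hca, smul_smul], by rw [Matrix.mul_smul, hca', smul_smul]⟩

end AssocScheme

end Scheme

section CentralIdempotents

variable {n : Type*} [Fintype n]

lemma eq_inv_card_of_isIdempotentElem_smul_allOnes {μ : ℂ}
    (h : IsIdempotentElem (μ • allOnes n)) (h0 : μ • allOnes n ≠ 0) :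
    μ = (Fintype.card n : ℂ)⁻¹ := by
  have hμ : μ ≠ 0 := by rintro rfl; exact h0 (zero_smul _ _)
  obtain ⟨i⟩ : Nonempty n := by
    by_contra hn
    exact h0 (Matrix.ext fun i => (hn ⟨i⟩).elim)
  have hii := congrFun (congrFun h.eq i) i
  rw [Matrix.smul_mul, Matrix.mul_smul, allOnes_mul_allOnes, smul_smul] at hii
  simp only [Matrix.smul_apply, allOnes, Matrix.of_apply, smul_eq_mul, mul_one] at hii
  refine eq_inv_of_mul_eq_one_left (mul_left_cancel₀ hμ ?_)
  rw [← mul_assoc, hii, mul_one]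

variable [DecidableEq n]

lemma IsCPI.mul_eq_zero_or_eq {𝒜 : Subalgebra ℂ (Matrix n n ℂ)} {e p : Matrix n n ℂ}
    (he : IsCPI (𝒜 : Set (Matrix n n ℂ)) e) (hp𝒜 : p ∈ 𝒜) (hp : IsIdempotentElem p)
    (hpc : ∀ a ∈ 𝒜, Commute a p) : e * p = 0 ∨ e * p = e := by
  obtain ⟨he𝒜, -, hee, hcentral, hprim⟩ := he
  have hec : ∀ a ∈ 𝒜, Commute a e := hcentral
  have hcp : ∀ a ∈ 𝒜, Commute a (1 - p) := fun a ha =>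
    (Commute.one_right a).sub_right (hpc a ha)
  have hep : Commute e p := hpc e he𝒜
  by_contra! h
  have hq0 : e * (1 - p) ≠ 0 := by rw [mul_one_sub, sub_ne_zero]; exact h.2.symm
  refine hprim ⟨e * p, e * (1 - p), mul_mem he𝒜 hp𝒜, mul_mem he𝒜 (sub_mem (one_mem 𝒜) hp𝒜),
    h.1, hq0, IsIdempotentElem.mul_of_commute hep hee hp, ?_,
    fun a ha => ((hec a ha).mul_right (hpc a ha)).eq,
    fun a ha => ((hec a ha).mul_right (hcp a ha)).eq, ?_, ?_,
    by rw [← mul_add, add_sub_cancel, mul_one]⟩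
  · exact IsIdempotentElem.mul_of_commute (hcp e he𝒜) hee hp.one_sub
  · rw [(hep.symm.mul_mul_mul_comm e (1 - p)), mul_one_sub, hp.eq, sub_self, mul_zero]
  · rw [((hcp e he𝒜).symm.mul_mul_mul_comm e p), one_sub_mul, hp.eq, sub_self, mul_zero]

lemma IsCPI.image {m F : Type*} [Fintype m] [DecidableEq m]
    [FunLike F (Matrix m m ℂ) (Matrix n n ℂ)]
    [NonUnitalRingHomClass F (Matrix m m ℂ) (Matrix n n ℂ)]
    {𝒜 : Set (Matrix m m ℂ)} {𝒯 : Set (Matrix n n ℂ)} {e : Matrix m m ℂ}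
    (he : IsCPI 𝒜 e) (φ : F) (hφ : Function.Injective φ) (hmaps : Set.MapsTo φ 𝒜 𝒯)
    (hcent : ∀ w ∈ 𝒯, w * φ e = φ e * w) (hcorner : ∀ w ∈ 𝒯, φ e * w ∈ φ '' 𝒜) :
    IsCPI 𝒯 (φ e) := by
  obtain ⟨he𝒜, he0, hee, -, hprim⟩ := he
  refine ⟨hmaps he𝒜, (map_ne_zero_iff φ hφ).mpr he0, by rw [← map_mul, hee], hcent, ?_⟩
  rintro ⟨f, g, hf, hg, hf0, hg0, hff, hgg, hfc, hgc, hfg, hgf, hsum⟩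
  obtain ⟨M, hM, rfl⟩ : f ∈ φ '' 𝒜 := by
    simpa [hsum, add_mul, hff, hgf] using hcorner f hf
  obtain ⟨N, hN, rfl⟩ : g ∈ φ '' 𝒜 := by
    simpa [hsum, add_mul, hgg, hfg] using hcorner g hg
  have hcomm : ∀ M, (∀ w ∈ 𝒯, w * φ M = φ M * w) → ∀ a ∈ 𝒜, a * M = M * a :=
    fun M h a ha => hφ (by simpa only [map_mul] using h _ (hmaps ha))
  refine hprim ⟨M, N, hM, hN, fun h => hf0 (by rw [h, map_zero]),
    fun h => hg0 (by rw [h, map_zero]),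
    hφ (by rw [map_mul, hff]), hφ (by rw [map_mul, hgg]), hcomm M hfc, hcomm N hgc,
    hφ (by rw [map_mul, hfg, map_zero]), hφ (by rw [map_mul, hgf, map_zero]),
    hφ (by rw [map_add, hsum])⟩

end CentralIdempotents

lemma IsIdempotentElem.mul_mem_of_mem_adjoin {R A : Type*} [CommSemiring R] [Semiring A]
    [Algebra R A] {s : Set A} {c : A} {N : NonUnitalSubalgebra R A} (hc : IsIdempotentElem c)
    (hcN : c ∈ N) (hcomm : ∀ g ∈ s, Commute g c) (hs : ∀ g ∈ s, c * g ∈ N) {w : A}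
    (hw : w ∈ Algebra.adjoin R s) : c * w ∈ N := by
  induction hw using Algebra.adjoin_induction with
  | mem g hg => exact hs g hg
  | algebraMap r =>
    rw [← Algebra.commutes, ← Algebra.smul_def]
    exact N.smul_mem r hcN
  | add x y _ _ hx hy =>
    rw [mul_add]
    exact add_mem hx hy
  | mul x y hx _ hcx hcy =>
    have hxc : Commute x c :=
      (Algebra.commute_of_mem_adjoin_of_forall_mem_commute hx fun g hg => (hcomm g hg).symm).symm
    have hcxc : c * x * c = c * x := by rw [← hxc.eq, mul_assoc, hc.eq]
    rw [← mul_assoc, ← hcxc, mul_assoc (c * x)]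
    exact mul_mem hcx hcy

lemma AssocScheme.mul_allOnes_eq_zero_of_isCPI {Z : Type*} [Fintype Z] [DecidableEq Z]
    (S : AssocScheme Z) {e : Matrix Z Z ℂ} (he : IsCPI (adjAlgSet S) e)
    (hne : e ≠ ((Fintype.card Z : ℂ)⁻¹) • allOnes Z) : e * allOnes Z = 0 := by
  rw [← S.coe_adjAlg] at he
  have : Nonempty Z := by
    by_contra hZ
    exact he.2.1 (Matrix.ext fun i => (hZ ⟨i⟩).elim)
  have hcard : (Fintype.card Z : ℂ) ≠ 0 := Nat.cast_ne_zero.mpr Fintype.card_ne_zero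
  set P := ((Fintype.card Z : ℂ)⁻¹) • allOnes Z
  have hP : IsIdempotentElem P := by
    rw [IsIdempotentElem, smul_mul_smul_comm, allOnes_mul_allOnes, smul_smul,
      inv_mul_cancel_right₀ hcard]
  have hPc : ∀ a ∈ S.adjAlg, Commute a P := fun a ha => by
    obtain ⟨c, h, h'⟩ := S.exists_mul_allOnes_eq_smul ha
    exact Commute.smul_right (h.trans h'.symm) _
  obtain ⟨c, hc, -⟩ := S.exists_mul_allOnes_eq_smul he.1
  rcases he.mul_eq_zero_or_eq (Subalgebra.smul_mem _ S.allOnes_mem_adjAlg _) hP hPc with h | h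
  · rwa [mul_smul_comm, smul_eq_zero_iff_right (inv_ne_zero hcard)] at h
  · rw [mul_smul_comm, hc, smul_smul] at h
    have h' := eq_inv_card_of_isIdempotentElem_smul_allOnes (h ▸ he.2.2.1) (h ▸ he.2.1)
    exact absurd (by rw [← h, h']) hne

def kroneckerRightHom {R m n : Type*} [CommSemiring R] [Fintype m] [Fintype n]
    (E : Matrix n n R) (hE : IsIdempotentElem E) :
    Matrix m m R →ₙₐ[R] Matrix (m × n) (m × n) R where
  toFun M := M ⊗ₖ E
  map_smul' r M := Matrix.smul_kronecker r M E
  map_zero' := Matrix.zero_kronecker E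
  map_add' M N := Matrix.add_kronecker M N E
  map_mul' M N := by rw [← Matrix.mul_kronecker_mul, hE.eq]

@[simp]
lemma kroneckerRightHom_apply {R m n : Type*} [CommSemiring R] [Fintype m] [Fintype n]
    (E : Matrix n n R) (hE : IsIdempotentElem E) (M : Matrix m m R) :
    kroneckerRightHom E hE M = M ⊗ₖ E := rfl

lemma kroneckerRightHom_injective {R m n : Type*} [CommRing R] [IsDomain R] [Fintype m]
    [Fintype n] {E : Matrix n n R} (hE : IsIdempotentElem E) (hE0 : E ≠ 0) :
    Function.Injective (kroneckerRightHom (m := m) E hE) := by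
  obtain ⟨a, b, hab⟩ : ∃ a b, E a b ≠ 0 := by
    by_contra! h
    exact hE0 (Matrix.ext h)
  intro M N hMN
  ext i j
  have h := congrFun (congrFun hMN (i, a)) (j, b)
  simp only [kroneckerRightHom_apply, Matrix.kroneckerMap_apply] at h
  exact mul_right_cancel₀ hab h

section WreathTerwilliger

variable {X Y : Type*} [Fintype X] [DecidableEq X] [Fintype Y] [DecidableEq Y]
  (A : AssocScheme X) (B : AssocScheme Y) (x₀ : X) (y₀ : Y)

lemma kronecker_one_mem_wreathTerw {a : Matrix X X ℂ} (ha : a ∈ A.adjAlg) :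
    a ⊗ₖ (1 : Matrix Y Y ℂ) ∈ wreathTerw A B x₀ y₀ := by
  change a ∈ Submodule.span ℂ A.adjGens at ha
  induction ha using Submodule.span_induction with
  | mem _ hM =>
    obtain ⟨s, hs, rfl⟩ := hM
    exact Algebra.subset_adjoin (Or.inl (Or.inl (Or.inl ⟨s, hs, rfl⟩)))
  | zero => rw [Matrix.zero_kronecker]; exact zero_mem _
  | add a b _ _ ha hb => rw [Matrix.add_kronecker]; exact add_mem ha hb
  | smul r a _ ha => rw [Matrix.smul_kronecker]; exact Subalgebra.smul_mem _ ha r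

lemma kronecker_eps_pointFiber_mem_wreathTerw {t : Finset (Y × Y)} (ht : t ∈ B.rels)
    (ht1 : t ≠ diagRel Y) {a : Matrix X X ℂ} (ha : a ∈ A.adjAlg) :
    a ⊗ₖ eps (pointFiber y₀ t) ∈ wreathTerw A B x₀ y₀ := by
  rw [← mul_one a, ← one_mul (eps _), Matrix.mul_kronecker_mul]
  exact mul_mem (kronecker_one_mem_wreathTerw A B x₀ y₀ ha)
    (Algebra.subset_adjoin (Or.inr ⟨t, ht, ht1, rfl⟩))

lemma exists_mul_eq_kronecker_of_mem_wreathGens {t : Finset (Y × Y)} (ht : t ∈ B.rels)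
    (ht1 : t ≠ diagRel Y) {e : Matrix X X ℂ} (he : e ∈ A.adjAlg)
    (hec : ∀ a ∈ A.adjAlg, Commute a e) (heJ : e * allOnes X = 0) (hJe : allOnes X * e = 0)
    {g : Matrix (X × Y) (X × Y) ℂ} (hg : g ∈ wreathGens A B x₀ y₀) :
    ∃ M ∈ A.adjAlg, (e ⊗ₖ eps (pointFiber y₀ t)) * g = M ⊗ₖ eps (pointFiber y₀ t) ∧
      g * (e ⊗ₖ eps (pointFiber y₀ t)) = M ⊗ₖ eps (pointFiber y₀ t) := by
  rcases hg with ((⟨s, hs, rfl⟩ | ⟨s, -, rfl⟩) | ⟨u, -, -, rfl⟩) | ⟨u, hu, -, rfl⟩ <;>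
    simp only [← Matrix.mul_kronecker_mul]
  · refine ⟨e * adjMat s, mul_mem he (A.adjMat_mem_adjAlg hs), by rw [mul_one], ?_⟩
    rw [one_mul, (hec _ (A.adjMat_mem_adjAlg hs)).eq]
  · refine ⟨0, zero_mem _, ?_, ?_⟩ <;> rw [← pointFiber_diagRel, Matrix.zero_kronecker]
    · rw [B.eps_pointFiber_mul_eps_pointFiber ht B.id_mem, if_neg ht1, Matrix.kronecker_zero]
    · rw [B.eps_pointFiber_mul_eps_pointFiber B.id_mem ht, if_neg ht1.symm, Matrix.kronecker_zero]
  · exact ⟨0, zero_mem _, by rw [heJ, Matrix.zero_kronecker, Matrix.zero_kronecker],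
      by rw [hJe, Matrix.zero_kronecker, Matrix.zero_kronecker]⟩
  · rw [B.eps_pointFiber_mul_eps_pointFiber ht hu, B.eps_pointFiber_mul_eps_pointFiber hu ht,
      one_mul, mul_one]
    by_cases htu : t = u
    · subst htu
      exact ⟨e, he, by simp, by simp⟩
    · exact ⟨0, zero_mem _, by simp [htu], by simp [Ne.symm htu]⟩

end WreathTerwilliger

section Statements

variable {X Y : Type*} [Fintype X] [DecidableEq X] [Fintype Y] [DecidableEq Y]

theorem stmt10_general (A : AssocScheme X) (B : AssocScheme Y)
    (x₀ : X) (y₀ : Y) (t : Finset (Y × Y)) (ht : t ∈ B.rels) (ht1 : t ≠ diagRel Y)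
    (e : Matrix X X ℂ) (he : IsCPI (adjAlgSet A) e)
    (hne : e ≠ ((Fintype.card X : ℂ)⁻¹) • allOnes X) :
    IsCPI (wreathTerw A B x₀ y₀ : Set (Matrix (X × Y) (X × Y) ℂ))
      (e ⊗ₖ eps (pointFiber y₀ t)) := by
  have hE := isIdempotentElem_eps (pointFiber y₀ t)
  have heJ : e * allOnes X = 0 := A.mul_allOnes_eq_zero_of_isCPI he hne
  rw [← A.coe_adjAlg] at he
  have he𝒜 : e ∈ A.adjAlg := he.1
  have hee : IsIdempotentElem e := he.2.2.1
  have hec : ∀ a ∈ A.adjAlg, Commute a e := he.2.2.2.1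
  have hJe : allOnes X * e = 0 := (hec _ A.allOnes_mem_adjAlg).eq.trans heJ
  have hgens := fun g (hg : g ∈ wreathGens A B x₀ y₀) =>
    exists_mul_eq_kronecker_of_mem_wreathGens A B x₀ y₀ ht ht1 he𝒜 hec heJ hJe hg
  let φ := kroneckerRightHom (m := X) _ hE
  have hcomm : ∀ g ∈ wreathGens A B x₀ y₀, Commute g (φ e) := fun g hg => by
    obtain ⟨M, -, hcg, hgc⟩ := hgens g hg
    exact hgc.trans hcg.symm
  have hcentral : ∀ w ∈ wreathTerw A B x₀ y₀, w * φ e = φ e * w := fun w hw =>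
    (Algebra.commute_of_mem_adjoin_of_forall_mem_commute hw fun g hg => (hcomm g hg).symm).eq.symm
  have hcorner : ∀ w ∈ wreathTerw A B x₀ y₀, φ e * w ∈ φ '' A.adjAlg := fun w hw =>
    IsIdempotentElem.mul_mem_of_mem_adjoin (N := A.adjAlg.toNonUnitalSubalgebra.map φ)
      (IsIdempotentElem.map hee φ) ⟨e, he𝒜, rfl⟩ hcomm (fun g hg => by
        obtain ⟨M, hM, hcg, -⟩ := hgens g hg
        exact ⟨M, hM, hcg.symm⟩) hw
  exact he.image φ (kroneckerRightHom_injective hE (eps_ne_zero (B.pointFiber_nonempty ht y₀)))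
    (fun a ha => kronecker_eps_pointFiber_mem_wreathTerw A B x₀ y₀ ht ht1 ha) hcentral hcorner

theorem stmt10 (A : AssocScheme X) (B : AssocScheme Y) (h3 : ThreeEquivalenced B)
    (x₀ : X) (y₀ : Y) (t : Finset (Y × Y)) (ht : t ∈ B.rels) (ht1 : t ≠ diagRel Y)
    (e : Matrix X X ℂ) (he : IsCPI (adjAlgSet A) e)
    (hne : e ≠ ((Fintype.card X : ℂ)⁻¹) • allOnes X) :
    IsCPI (wreathTerw A B x₀ y₀ : Set (Matrix (X × Y) (X × Y) ℂ))
      (e ⊗ₖ eps (pointFiber y₀ t)) :=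
  stmt10_general A B x₀ y₀ t ht ht1 e he hne

end Statements
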